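/- arXiv:1910.03542 — 2 statements merged into one kernel-verified Lean document; each statement's English description precedes it below -/
import Mathlib

section
/- Let e : L → L^δ be a canonical extension of a frame L. If e is injective, then e preserves binary joins, hence is a frame homomorphism. -/
/-- A Scott-open filter of a frame: an upper set closed under finite meets such that
whenever a directed join lies in it, some member of the directed set lies in it. -/
structure IsScottOpenFilter {L : Type*} [Order.Frame L] (F : Set L) : Prop where
  mem_of_le : ∀ ⦃a b : L⦄, a ∈ F → a ≤ b → b ∈ F
  top_mem : ⊤ ∈ F
  inf_mem : ∀ ⦃a b : L⦄, a ∈ F → b ∈ F → a ⊓ b ∈ F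
  scottOpen : ∀ D : Set L, D.Nonempty → DirectedOn (· ≤ ·) D → sSup D ∈ F → ∃ d ∈ D, d ∈ F

/-- Density axiom for a canonical extension of a frame. -/
def IsCanonicalDense {L C : Type*} [Order.Frame L] [CompleteLattice C] (e : L → C) : Prop :=
  ∀ u v : C,
    (∀ (F : Set L) (a : L), IsScottOpenFilter F → sInf (e '' F) ≤ u → v ≤ e a →
      sInf (e '' F) ≤ e a) → u ≤ v

/-- Compactness axiom for a canonical extension of a frame. -/
def IsCanonicalCompact {L C : Type*} [Order.Frame L] [CompleteLattice C] (e : L → C) : Prop :=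
  ∀ (F : Set L) (a : L), IsScottOpenFilter F → sInf (e '' F) ≤ e a → a ∈ F

/-!
Density reduces an inequality `u ≤ v` in `C` to the tests "`⋀ e[F] ≤ u` and `v ≤ e c` imply
`⋀ e[F] ≤ e c`" over Scott-open filters `F`, and compactness turns the hypothesis `⋀ e[F] ≤ e x`
into `x ∈ F`. Since filters are closed under finite meets, `e` preserves `⊓` and `⊤`; injectivity
then makes `e` an order embedding. So if `⨆ e[S] ≤ e c`, every element of `S` lies below `c`,
hence `sSup S ≤ c`, and any filter containing `sSup S` contains `c`: `e` preserves all joins.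
-/

namespace IsCanonicalDense

variable {L C : Type*} [Order.Frame L] [CompleteLattice C] {e : L → C}

theorem le_apply_of_forall_mem (hdense : IsCanonicalDense e) {u : C} {y : L}
    (h : ∀ F : Set L, IsScottOpenFilter F → sInf (e '' F) ≤ u → y ∈ F) : u ≤ e y :=
  hdense _ _ fun F _ hF hu hy => (sInf_le (Set.mem_image_of_mem e (h F hF hu))).trans hy

theorem apply_le_of_forall_mem (hdense : IsCanonicalDense e) (hcompact : IsCanonicalCompact e)
    {x : L} {v : C} (h : ∀ (F : Set L) (c : L), IsScottOpenFilter F → x ∈ F → v ≤ e c → c ∈ F) :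
    e x ≤ v :=
  hdense _ _ fun F c hF hx hc =>
    sInf_le (Set.mem_image_of_mem e (h F c hF (hcompact F x hF hx) hc))

theorem monotone (hdense : IsCanonicalDense e) (hcompact : IsCanonicalCompact e) :
    Monotone e := fun a _ hab =>
  hdense.le_apply_of_forall_mem fun F hF ha => hF.mem_of_le (hcompact F a hF ha) hab

theorem map_top (hdense : IsCanonicalDense e) : e ⊤ = ⊤ :=
  top_le_iff.mp <| hdense.le_apply_of_forall_mem fun _ hF _ => hF.top_mem

theorem map_inf (hdense : IsCanonicalDense e) (hcompact : IsCanonicalCompact e) (a b : L) :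
    e (a ⊓ b) = e a ⊓ e b := by
  refine le_antisymm ((hdense.monotone hcompact).map_inf_le a b) (hdense.le_apply_of_forall_mem ?_)
  intro F hF hab
  exact hF.inf_mem (hcompact F a hF (hab.trans inf_le_left))
    (hcompact F b hF (hab.trans inf_le_right))

theorem map_le_map_iff (hdense : IsCanonicalDense e) (hcompact : IsCanonicalCompact e)
    (hinj : Function.Injective e) {a b : L} : e a ≤ e b ↔ a ≤ b := by
  refine ⟨fun h => inf_eq_left.mp (hinj ?_), fun h => hdense.monotone hcompact h⟩
  rw [hdense.map_inf hcompact, inf_eq_left.mpr h]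

theorem map_sSup (hdense : IsCanonicalDense e) (hcompact : IsCanonicalCompact e)
    (hinj : Function.Injective e) (S : Set L) : e (sSup S) = sSup (e '' S) := by
  refine le_antisymm (hdense.apply_le_of_forall_mem hcompact ?_)
    (sSup_image.trans_le (hdense.monotone hcompact).le_map_sSup)
  intro F c hF hS hc
  refine hF.mem_of_le hS (sSup_le fun s hs => ?_)
  exact (hdense.map_le_map_iff hcompact hinj).mp ((le_sSup (Set.mem_image_of_mem e hs)).trans hc)

theorem map_sup (hdense : IsCanonicalDense e) (hcompact : IsCanonicalCompact e)
    (hinj : Function.Injective e) (a b : L) : e (a ⊔ b) = e a ⊔ e b := by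
  rw [← sSup_pair, hdense.map_sSup hcompact hinj, Set.image_pair, sSup_pair]

end IsCanonicalDense

theorem canonicalExtension_injective_frameHom_general {L C : Type*} [Order.Frame L] [CompleteLattice C]
    (e : L → C) (hdense : IsCanonicalDense e)
    (hcompact : IsCanonicalCompact e) (hinj : Function.Injective e) :
    (∀ a b : L, e (a ⊔ b) = e a ⊔ e b) ∧
    (∀ S : Set L, e (sSup S) = sSup (e '' S)) ∧
    (∀ a b : L, e (a ⊓ b) = e a ⊓ e b) ∧ e ⊤ = ⊤ :=
  ⟨hdense.map_sup hcompact hinj, hdense.map_sSup hcompact hinj, hdense.map_inf hcompact,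
    hdense.map_top⟩

/-- If a canonical extension `e : L → L^δ` of a frame is injective, then it preserves
binary joins, and hence (together with the finite meets, `⊤` and directed joins it
always preserves) it is a frame homomorphism. -/
theorem canonicalExtension_injective_frameHom {L C : Type*} [Order.Frame L] [CompleteLattice C]
    (e : L → C) (hmono : Monotone e) (hdense : IsCanonicalDense e)
    (hcompact : IsCanonicalCompact e) (hinj : Function.Injective e) :
    (∀ a b : L, e (a ⊔ b) = e a ⊔ e b) ∧
    (∀ S : Set L, e (sSup S) = sSup (e '' S)) ∧
    (∀ a b : L, e (a ⊓ b) = e a ⊓ e b) ∧ e ⊤ = ⊤ :=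
  canonicalExtension_injective_frameHom_general e hdense hcompact hinj
end

section
/- Let e : L → L^δ be a monotone map from a frame L into a complete lattice satisfying the density axiom. Then e satisfies the compactness axiom if and only if it satisfies the stronger condition: whenever ⋀{⋀e[F] | F ∈ 𝓕} ≤ ⋁e[D] for a filtered family 𝓕 of Scott-open filters (filtered with respect to reverse inclusion, i.e., up-directed under inclusion) and a directed set D ⊆ L, there exist F ∈ 𝓕 and d ∈ D with d ∈ F. -/
/-!
A directed union of Scott-open filters is again a Scott-open filter, and its meet under `e` lies
below the meet of the family, so compactness applied to the union and to `⋁ D` gives (Compact+).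
Conversely, compactness is (Compact+) for a single filter and a singleton `D`.
-/

theorem IsScottOpenFilter.sUnion {L : Type*} [Order.Frame L] {𝓕 : Set (Set L)}
    (hne : 𝓕.Nonempty) (h𝓕 : ∀ F ∈ 𝓕, IsScottOpenFilter F) (hdir : DirectedOn (· ⊆ ·) 𝓕) :
    IsScottOpenFilter (⋃₀ 𝓕) where
  mem_of_le := by
    rintro a b ⟨F, hF, haF⟩ hab
    exact ⟨F, hF, (h𝓕 F hF).mem_of_le haF hab⟩
  top_mem := by
    obtain ⟨F, hF⟩ := hne
    exact ⟨F, hF, (h𝓕 F hF).top_mem⟩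
  inf_mem := by
    rintro a b ⟨F₁, hF₁, ha⟩ ⟨F₂, hF₂, hb⟩
    obtain ⟨F, hF, h₁, h₂⟩ := hdir F₁ hF₁ F₂ hF₂
    exact ⟨F, hF, (h𝓕 F hF).inf_mem (h₁ ha) (h₂ hb)⟩
  scottOpen := by
    rintro D hDne hDdir ⟨F, hF, hD⟩
    obtain ⟨d, hd, hdF⟩ := (h𝓕 F hF).scottOpen D hDne hDdir hD
    exact ⟨d, hd, F, hF, hdF⟩

theorem sInf_image_sUnion {α β : Type*} [CompleteLattice β] (e : α → β) (𝓕 : Set (Set α)) :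
    sInf (e '' ⋃₀ 𝓕) = ⨅ F ∈ 𝓕, sInf (e '' F) := by
  simp only [sInf_image, iInf_sUnion]

theorem IsCanonicalCompact.exists_mem_of_iInf_le_sSup {L C : Type*} [Order.Frame L]
    [CompleteLattice C] {e : L → C} (hcomp : IsCanonicalCompact e) (hmono : Monotone e)
    {𝓕 : Set (Set L)} (hne : 𝓕.Nonempty) (h𝓕 : ∀ F ∈ 𝓕, IsScottOpenFilter F)
    (hdir : DirectedOn (· ⊆ ·) 𝓕) {D : Set L} (hDne : D.Nonempty) (hDdir : DirectedOn (· ≤ ·) D)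
    (hle : (⨅ F ∈ 𝓕, sInf (e '' F)) ≤ sSup (e '' D)) :
    ∃ F ∈ 𝓕, ∃ d ∈ D, d ∈ F := by
  have hG := IsScottOpenFilter.sUnion hne h𝓕 hdir
  have hsup : sSup D ∈ ⋃₀ 𝓕 := hcomp _ _ hG <|
    calc sInf (e '' ⋃₀ 𝓕) = ⨅ F ∈ 𝓕, sInf (e '' F) := sInf_image_sUnion e 𝓕
      _ ≤ sSup (e '' D) := hle
      _ ≤ e (sSup D) := sSup_image.trans_le hmono.le_map_sSup
  obtain ⟨d, hd, F, hF, hdF⟩ := hG.scottOpen D hDne hDdir hsup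
  exact ⟨F, hF, d, hd, hdF⟩

theorem canonicalCompact_iff_compactPlus_general {L C : Type*} [Order.Frame L] [CompleteLattice C]
    (e : L → C) (hmono : Monotone e) :
    IsCanonicalCompact e ↔
      ∀ 𝓕 : Set (Set L), 𝓕.Nonempty → (∀ F ∈ 𝓕, IsScottOpenFilter F) →
        DirectedOn (· ⊆ ·) 𝓕 →
        ∀ D : Set L, D.Nonempty → DirectedOn (· ≤ ·) D →
          (⨅ F ∈ 𝓕, sInf (e '' F)) ≤ sSup (e '' D) →
          ∃ F ∈ 𝓕, ∃ d ∈ D, d ∈ F := by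
  refine ⟨fun hcomp _ hne h𝓕 hdir _ =>
    hcomp.exists_mem_of_iInf_le_sSup hmono hne h𝓕 hdir, fun h F a hF hle => ?_⟩
  obtain ⟨_, rfl, _, rfl, ha⟩ := h {F} (Set.singleton_nonempty F) (by simpa using hF)
    (directedOn_singleton F) {a} (Set.singleton_nonempty a) (directedOn_singleton a)
    (by simpa using hle)
  exact ha

/-- For a monotone map `e : L → L^δ` satisfying density, the compactness axiom is
equivalent to the stronger condition (Compact+): whenever
`⋀{⋀e[F] | F ∈ 𝓕} ≤ ⋁ e[D]` for a filtered (w.r.t. reverse inclusion, i.e.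
up-directed under inclusion) family `𝓕` of Scott-open filters and a directed `D ⊆ L`,
some `d ∈ D` belongs to some `F ∈ 𝓕`. -/
theorem canonicalCompact_iff_compactPlus {L C : Type*} [Order.Frame L] [CompleteLattice C]
    (e : L → C) (hmono : Monotone e) (hdense : IsCanonicalDense e) :
    IsCanonicalCompact e ↔
      ∀ 𝓕 : Set (Set L), 𝓕.Nonempty → (∀ F ∈ 𝓕, IsScottOpenFilter F) →
        DirectedOn (· ⊆ ·) 𝓕 →
        ∀ D : Set L, D.Nonempty → DirectedOn (· ≤ ·) D →
          (⨅ F ∈ 𝓕, sInf (e '' F)) ≤ sSup (e '' D) →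
          ∃ F ∈ 𝓕, ∃ d ∈ D, d ∈ F :=
  canonicalCompact_iff_compactPlus_general e hmono
end
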